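/- arXiv:2004.12371 — 11 statements merged into one kernel-verified Lean document; each statement's English description precedes it below -/
import Mathlib

section
/- Let A and B be types and R ⊆ A × B. Then R is a finite union of rectangles (i.e., there exist k ∈ ℕ and families S : Fin k → Set A, T : Fin k → Set B with R = ⋃_{i<k} S_i ×ˢ T_i) if and only if the set of fibers { {y : B | (x,y) ∈ R} | x ∈ A } is finite. -/
/-!
The fiber of `⋃ i, S i ×ˢ T i` at `x` is the union of the `T i` with `x ∈ S i`, so it is
determined by a subset of the finite index set. Conversely, `R` is the union of the rectangles
`{x | fiber of R at x = F} ×ˢ F`, one for each fiber `F`.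
-/

namespace Set

variable {A B ι : Type*}

theorem fiber_iUnion_prod (S : ι → Set A) (T : ι → Set B) (x : A) :
    {y | (x, y) ∈ ⋃ i, S i ×ˢ T i} = ⋃ i ∈ {i | x ∈ S i}, T i := by
  ext y
  simp only [mem_ofPred_eq, mem_iUnion, mem_prod, exists_prop]

theorem finite_range_fiber_iUnion_prod [Finite ι] (S : ι → Set A) (T : ι → Set B) :
    (range fun x : A => {y : B | (x, y) ∈ ⋃ i, S i ×ˢ T i}).Finite := by
  refine (finite_range fun σ : Set ι => ⋃ i ∈ σ, T i).subset ?_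
  rintro _ ⟨x, rfl⟩
  exact ⟨{i | x ∈ S i}, (fiber_iUnion_prod S T x).symm⟩

theorem eq_iUnion_prod_fiber (R : Set (A × B)) :
    R = ⋃ F : range fun x : A => {y : B | (x, y) ∈ R},
      {x | {y | (x, y) ∈ R} = (F : Set B)} ×ˢ (F : Set B) := by
  ext ⟨x, y⟩
  simp only [mem_iUnion, mem_prod, mem_ofPred_eq, Subtype.exists, mem_range, exists_prop]
  constructor
  · exact fun hxy => ⟨_, ⟨x, rfl⟩, rfl, hxy⟩
  · rintro ⟨F, -, hx, hy⟩
    rwa [← hx] at hy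

end Set

/-- A relation `R ⊆ A × B` is a finite union of rectangles iff the set of its
fibers `{ {y | (x,y) ∈ R} | x ∈ A }` is finite. -/
theorem stmt_0 {A B : Type*} (R : Set (A × B)) :
    (∃ (k : ℕ) (S : Fin k → Set A) (T : Fin k → Set B),
        R = ⋃ i, S i ×ˢ T i) ↔
      (Set.range fun x : A => {y : B | (x, y) ∈ R}).Finite := by
  constructor
  · rintro ⟨k, S, T, rfl⟩
    exact Set.finite_range_fiber_iUnion_prod S T
  · intro h
    obtain ⟨k, ⟨e⟩⟩ := @Finite.exists_equiv_fin _ h.to_subtype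
    refine ⟨k, fun i => {x | {y | (x, y) ∈ R} = (e.symm i : Set B)},
      fun i => (e.symm i : Set B), ?_⟩
    exact (Set.eq_iUnion_prod_fiber R).trans (e.symm.surjective.iUnion_comp _).symm
end

section
/- Let A and B be types, k ∈ ℕ, S : Fin k → Set A and T : Fin k → Set B, and suppose R = ⋃_{i<k} S_i ×ˢ T_i ⊆ A × B. Then the set of fibers { {y : B | (x,y) ∈ R} | x ∈ A } has at most 2^k elements. -/
theorem Set.fiber_iUnion_prod_s1 {ι A B : Type*} (S : ι → Set A) (T : ι → Set B) (x : A) :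
    {y : B | (x, y) ∈ ⋃ i, S i ×ˢ T i} = ⋃ i ∈ {i | x ∈ S i}, T i := by
  ext y
  simp

theorem Set.encard_range_powerset_le {ι α : Type*} [Fintype ι] (f : Set ι → α) :
    (Set.range f).encard ≤ 2 ^ Fintype.card ι := by
  calc (Set.range f).encard
      ≤ (Set.univ : Set (Set ι)).encard := by
        rw [← Set.image_univ]; exact Set.encard_image_le f _
    _ = 2 ^ Fintype.card ι := by
        rw [Set.encard_univ, ENat.card_eq_coe_fintype_card, Fintype.card_set]; norm_num

/-- If `R = ⋃_{i < k} S i ×ˢ T i` then `R` has at most `2 ^ k` distinct fibers. -/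
theorem stmt_1 {A B : Type*} (k : ℕ) (S : Fin k → Set A) (T : Fin k → Set B)
    (R : Set (A × B)) (hR : R = ⋃ i, S i ×ˢ T i) :
    (Set.range fun x : A => {y : B | (x, y) ∈ R}).encard ≤ 2 ^ k := by
  subst hR
  have fibers_sub : (Set.range fun x : A => {y : B | (x, y) ∈ ⋃ i, S i ×ˢ T i}) ⊆
      Set.range fun I : Set (Fin k) => ⋃ i ∈ I, T i := by
    rintro _ ⟨x, rfl⟩
    exact ⟨{i | x ∈ S i}, (Set.fiber_iUnion_prod_s1 S T x).symm⟩
  simpa using (Set.encard_mono fibers_sub).trans (Set.encard_range_powerset_le _)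
end

section
/- Let A and B be types, R ⊆ A × B, let ~ be the relation on A defined by x ~ x' iff ∀ y y', ((x,y) ∈ R ∧ (x',y') ∈ R) → ((x',y) ∈ R ∧ (x,y') ∈ R), and let D = {x : A | ∃ y, (x,y) ∈ R}. Then R is a finite union of rectangles if and only if the set of ~-equivalence classes of elements of D, i.e. the set { {x' ∈ D | x ~ x'} | x ∈ D }, is finite. -/
/-!
Write `R_x = {y | (x, y) ∈ R}` for the row of `x`. On the domain `D`, `x ~ x'` holds exactly when
`R_x = R_x'`, so the `~`-classes of `D` are in bijection with the distinct nonempty rows. If `R` is a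
union of `k` rectangles `S i ×ˢ T i`, then each row is `⋃ i ∈ I, T i` for `I = {i | x ∈ S i}`, so
there are at most `2 ^ k` rows; conversely, if there are finitely many rows `r`, then `R` is the
union of the rectangles `{x | R_x = r} ×ˢ r`.
-/

open Set

namespace Set

variable {A B : Type*}

theorem finite_image_preimage_mk_of_eq_iUnion_prod {ι : Type*} [Finite ι] {R : Set (A × B)}
    {S : ι → Set A} {T : ι → Set B} (hR : R = ⋃ i, S i ×ˢ T i) (D : Set A) :
    ((fun x => Prod.mk x ⁻¹' R) '' D).Finite := by
  refine (finite_range fun I : Set ι => ⋃ i ∈ I, T i).subset ?_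
  rintro _ ⟨x, -, rfl⟩
  exact ⟨{i | x ∈ S i}, by ext y; simp [hR]⟩

theorem exists_eq_iUnion_prod_of_finite_image_preimage_mk {R : Set (A × B)}
    (h : ((fun x => Prod.mk x ⁻¹' R) '' {x | ∃ y, (x, y) ∈ R}).Finite) :
    ∃ (k : ℕ) (S : Fin k → Set A) (T : Fin k → Set B), R = ⋃ i, S i ×ˢ T i := by
  obtain ⟨k, r, hr⟩ := h.fin_embedding
  refine ⟨k, fun i => {x | Prod.mk x ⁻¹' R = r i}, fun i => r i, ?_⟩
  ext ⟨x, y⟩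
  simp only [mem_iUnion, mem_prod, mem_ofPred_eq]
  constructor
  · intro hxy
    obtain ⟨i, hi⟩ : Prod.mk x ⁻¹' R ∈ range r := hr ▸ mem_image_of_mem _ ⟨y, hxy⟩
    exact ⟨i, hi.symm, hi ▸ hxy⟩
  · rintro ⟨i, hi, hy⟩
    exact (hi ▸ hy : y ∈ Prod.mk x ⁻¹' R)

theorem exists_eq_iUnion_prod_iff_finite_image_preimage_mk (R : Set (A × B)) :
    (∃ (k : ℕ) (S : Fin k → Set A) (T : Fin k → Set B), R = ⋃ i, S i ×ˢ T i) ↔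
      ((fun x => Prod.mk x ⁻¹' R) '' {x | ∃ y, (x, y) ∈ R}).Finite :=
  ⟨fun ⟨_, _, _, hR⟩ => finite_image_preimage_mk_of_eq_iUnion_prod hR _,
    exists_eq_iUnion_prod_of_finite_image_preimage_mk⟩

theorem finite_image_fiber_iff {β : Type*} (g : A → β) (D : Set A) :
    ((fun x => {x' ∈ D | g x = g x'}) '' D).Finite ↔ (g '' D).Finite := by
  rw [← image_image (fun b => {x' ∈ D | b = g x'}) g]
  refine finite_image_iff ?_
  rintro _ ⟨x, hx, rfl⟩ _ ⟨x', -, rfl⟩ h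
  have hxx : x ∈ {x'' ∈ D | g x = g x''} := ⟨hx, rfl⟩
  dsimp only at h
  rw [h] at hxx
  exact hxx.2.symm

theorem rectangle_swap_iff_preimage_mk_eq {R : Set (A × B)} {x x' : A} {y₀ y₁ : B}
    (h₀ : (x, y₀) ∈ R) (h₁ : (x', y₁) ∈ R) :
    (∀ y y', (x, y) ∈ R ∧ (x', y') ∈ R → (x', y) ∈ R ∧ (x, y') ∈ R) ↔
      Prod.mk x ⁻¹' R = Prod.mk x' ⁻¹' R := by
  constructor
  · intro h
    ext y
    exact ⟨fun hy => (h y y₁ ⟨hy, h₁⟩).1, fun hy => (h y₀ y ⟨h₀, hy⟩).2⟩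
  · rintro h y y' ⟨hy, hy'⟩
    exact ⟨(h ▸ hy : y ∈ Prod.mk x' ⁻¹' R), (h ▸ hy' : y' ∈ Prod.mk x ⁻¹' R)⟩

end Set

/-- `R` is a finite union of rectangles iff the set of `~`-equivalence classes of
elements of the domain `D` is finite. -/
theorem stmt_3 {A B : Type*} (R : Set (A × B))
    (sim : A → A → Prop)
    (hsim : ∀ x x', sim x x' ↔
      ∀ y y', (x, y) ∈ R ∧ (x', y') ∈ R → (x', y) ∈ R ∧ (x, y') ∈ R)
    (D : Set A) (hD : D = {x : A | ∃ y, (x, y) ∈ R}) :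
    (∃ (k : ℕ) (S : Fin k → Set A) (T : Fin k → Set B),
        R = ⋃ i, S i ×ˢ T i) ↔
      {C : Set A | ∃ x ∈ D, C = {x' ∈ D | sim x x'}}.Finite := by
  have hclass : ∀ x ∈ D, {x' ∈ D | sim x x'} = {x' ∈ D | Prod.mk x ⁻¹' R = Prod.mk x' ⁻¹' R} := by
    intro x hx
    ext x'
    refine and_congr_right fun hx' => ?_
    rw [hD] at hx hx'
    obtain ⟨y₀, h₀⟩ := hx
    obtain ⟨y₁, h₁⟩ := hx'
    exact (hsim x x').trans (rectangle_swap_iff_preimage_mk_eq h₀ h₁)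
  have hclasses : {C : Set A | ∃ x ∈ D, C = {x' ∈ D | sim x x'}} =
      (fun x => {x' ∈ D | Prod.mk x ⁻¹' R = Prod.mk x' ⁻¹' R}) '' D := by
    ext C
    simp only [mem_ofPred_eq, mem_image, eq_comm (a := C)]
    exact exists_congr fun x => and_congr_right fun hx => by rw [hclass x hx]
  rw [exists_eq_iUnion_prod_iff_finite_image_preimage_mk, hclasses, finite_image_fiber_iff, hD]
end

section
/- Let N, k ∈ ℕ and suppose { (x,y) ∈ ℕ × ℕ | x + y ≤ N } = ⋃_{i<k} S_i ×ˢ T_i for some S : Fin k → Set ℕ and T : Fin k → Set ℕ. Then k ≥ N + 1. In particular, any representation of {(x,y) | x + y ≤ 2^n} as a finite union of rectangles (a monadic decomposition in disjunctive normal form) requires at least 2^n + 1 disjuncts. -/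
/-!
The points `(j, N - j)`, `j ≤ N`, form a fooling set for the triangle: if two of them with
`a < b` lay in a common rectangle `S ×ˢ T`, so would `(b, N - a)`, but `b + (N - a) > N`.
Hence each rectangle of a cover contains at most one of these `N + 1` points.
-/

open Set

def IsFoolingSet {α β κ : Type*} (A : Set (α × β)) (p : κ → α × β) : Prop :=
  (∀ j, p j ∈ A) ∧ ∀ j j', j ≠ j' → ((p j).1, (p j').2) ∉ A ∨ ((p j').1, (p j).2) ∉ A

theorem IsFoolingSet.card_le_of_eq_iUnion_prod {α β ι κ : Type*} [Fintype ι] [Fintype κ]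
    {A : Set (α × β)} {p : κ → α × β} (hp : IsFoolingSet A p)
    {S : ι → Set α} {T : ι → Set β} (hA : A = ⋃ i, S i ×ˢ T i) :
    Fintype.card κ ≤ Fintype.card ι := by
  have hcover : ∀ j, ∃ i, p j ∈ S i ×ˢ T i := fun j => mem_iUnion.1 (hA ▸ hp.1 j)
  choose f hf using hcover
  refine Fintype.card_le_of_injective f fun j j' hjj' => ?_
  by_contra hne
  have hmix : ∀ a b, f a = f b → ((p a).1, (p b).2) ∈ A := fun a b hab =>
    hA ▸ mem_iUnion.2 ⟨f a, (hf a).1, hab ▸ (hf b).2⟩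
  rcases hp.2 j j' hne with h | h
  · exact h (hmix j j' hjj')
  · exact h (hmix j' j hjj'.symm)

theorem isFoolingSet_antidiagonal (N : ℕ) :
    IsFoolingSet {p : ℕ × ℕ | p.1 + p.2 ≤ N} fun j : Fin (N + 1) => ((j : ℕ), N - j) := by
  refine ⟨fun j => by simp only [mem_ofPred_eq]; omega, fun j j' hne => ?_⟩
  have := Fin.val_ne_of_ne hne
  simp only [mem_ofPred_eq]
  omega

theorem le_card_of_triangle_eq_iUnion_prod {N k : ℕ} {S T : Fin k → Set ℕ}
    (h : {p : ℕ × ℕ | p.1 + p.2 ≤ N} = ⋃ i, S i ×ˢ T i) : N + 1 ≤ k := by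
  simpa using (isFoolingSet_antidiagonal N).card_le_of_eq_iUnion_prod h

/-- Any representation of `{(x,y) | x + y ≤ N}` as a union of `k` rectangles
requires `k ≥ N + 1`; in particular `{(x,y) | x + y ≤ 2^n}` needs at least
`2^n + 1` disjuncts. -/
theorem stmt_6 :
    (∀ (N k : ℕ) (S T : Fin k → Set ℕ),
        {p : ℕ × ℕ | p.1 + p.2 ≤ N} = ⋃ i, S i ×ˢ T i → k ≥ N + 1) ∧
    (∀ (n k : ℕ) (S T : Fin k → Set ℕ),
        {p : ℕ × ℕ | p.1 + p.2 ≤ 2 ^ n} = ⋃ i, S i ×ˢ T i → k ≥ 2 ^ n + 1) :=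
  ⟨fun _ _ _ _ => le_card_of_triangle_eq_iUnion_prod,
    fun _ _ _ _ => le_card_of_triangle_eq_iUnion_prod⟩
end

section
/- Let N, k ∈ ℕ and suppose { (x,y) ∈ ℕ × ℕ | x + y ≤ N } = ⋂_{j<k} ((S_j ×ˢ Set.univ) ∪ (Set.univ ×ˢ T_j)) for some S : Fin k → Set ℕ and T : Fin k → Set ℕ. Then k ≥ N + 2. In particular, any monadic decomposition of {(x,y) | x + y ≤ 2^n} in conjunctive normal form requires at least 2^n + 2 clauses. -/
/-!
Each point `(x, N + 1 - x)` with `x ≤ N + 1` lies outside the triangle, so some clause excludes it,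
i.e. has `x ∉ S j` and `N + 1 - x ∉ T j`. A single clause cannot exclude two such points
`x < y`, for then it would also exclude `(x, N + 1 - y)`, which lies in the triangle. Hence the
`N + 2` points need `N + 2` distinct clauses.
-/

open Set

def monadicCNF {ι α β : Type*} (S : ι → Set α) (T : ι → Set β) : Set (α × β) :=
  ⋂ j, (S j ×ˢ univ) ∪ (univ ×ˢ T j)

@[simp]
lemma mem_monadicCNF {ι α β : Type*} {S : ι → Set α} {T : ι → Set β} {p : α × β} :
    p ∈ monadicCNF S T ↔ ∀ j, p.1 ∈ S j ∨ p.2 ∈ T j := by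
  simp [monadicCNF]

lemma card_le_of_fooling_family {ι κ α β : Type*} [Fintype ι] [Fintype κ]
    {S : ι → Set α} {T : ι → Set β} (a : κ → α) (b : κ → β)
    (hout : ∀ i, (a i, b i) ∉ monadicCNF S T)
    (hcross : ∀ i i', i ≠ i' →
      (a i, b i') ∈ monadicCNF S T ∨ (a i', b i) ∈ monadicCNF S T) :
    Fintype.card κ ≤ Fintype.card ι := by
  have hclause : ∀ i, ∃ j, a i ∉ S j ∧ b i ∉ T j := by
    intro i
    simpa [not_or] using hout i
  choose f hfS hfT using hclause
  refine Fintype.card_le_of_injective f fun i i' hf => ?_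
  by_contra hne
  rcases hcross i i' hne with hin | hin
  · rcases mem_monadicCNF.mp hin (f i) with h | h
    · exact hfS i h
    · exact hfT i' (hf ▸ h)
  · rcases mem_monadicCNF.mp hin (f i) with h | h
    · exact hfS i' (hf ▸ h)
    · exact hfT i h

lemma add_two_le_of_triangle_eq_monadicCNF {N k : ℕ} {S T : Fin k → Set ℕ}
    (h : {p : ℕ × ℕ | p.1 + p.2 ≤ N} = monadicCNF S T) :
    N + 2 ≤ k := by
  have hcard := card_le_of_fooling_family (S := S) (T := T)
    (fun x : Fin (N + 2) => (x : ℕ)) (fun x => N + 1 - x)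
    (fun x => by rw [← h]; simp only [mem_ofPred_eq]; omega)
    (fun x y hxy => by
      rw [← h]
      have := Fin.val_ne_of_ne hxy
      have := x.isLt
      have := y.isLt
      simp only [mem_ofPred_eq]
      omega)
  simpa using hcard

/-- Any representation of `{(x,y) | x + y ≤ N}` as an intersection of `k` clauses
`(S j ×ˢ univ) ∪ (univ ×ˢ T j)` requires `k ≥ N + 2`; in particular a CNF monadic
decomposition of `{(x,y) | x + y ≤ 2^n}` needs at least `2^n + 2` clauses. -/
theorem stmt_7 :
    (∀ (N k : ℕ) (S T : Fin k → Set ℕ),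
        {p : ℕ × ℕ | p.1 + p.2 ≤ N} =
          ⋂ j, ((S j ×ˢ (Set.univ : Set ℕ)) ∪ ((Set.univ : Set ℕ) ×ˢ T j)) →
        k ≥ N + 2) ∧
    (∀ (n k : ℕ) (S T : Fin k → Set ℕ),
        {p : ℕ × ℕ | p.1 + p.2 ≤ 2 ^ n} =
          ⋂ j, ((S j ×ˢ (Set.univ : Set ℕ)) ∪ ((Set.univ : Set ℕ) ×ˢ T j)) →
        k ≥ 2 ^ n + 2) :=
  ⟨fun _ _ _ _ h => add_two_le_of_triangle_eq_monadicCNF h,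
    fun _ _ _ _ h => add_two_le_of_triangle_eq_monadicCNF h⟩
end

section
/- Let n ∈ ℕ, let A : Fin n → Type, and let R ⊆ (∀ i, A i). Then R is a finite union of boxes (i.e., there exist k ∈ ℕ and S : Fin k → ∀ i, Set (A i) with R = ⋃_{j<k} { x | ∀ i, x i ∈ S j i }) if and only if for every coordinate i, the function mapping a : A i to the set { x : (∀ j, A j) | Function.update x i a ∈ R } has finite range. -/
/-!
The section of a box `univ.pi S` at `x i = a` is `(univ \ {i}).pi S` or empty according as
`a ∈ S i`, so each section of a finite union of boxes takes finitely many values. Conversely,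
whether `x ∈ R` depends only on the profile `i ↦ {y | update y i (x i) ∈ R}`: changing `x` one
coordinate at a time without changing its profile never changes membership. So `R` is the union
of the boxes on which the profile is constant, one for each of the finitely many profiles of
points of `R`.
-/

open Set Function

theorem Set.finite_range_iUnion {α β J : Type*} [Finite J] {f : J → α → Set β}
    (hf : ∀ j, (range (f j)).Finite) : (range fun a => ⋃ j, f j a).Finite := by
  refine ((Finite.pi hf).image fun g : J → Set β => ⋃ j, g j).subset ?_
  rintro _ ⟨a, rfl⟩
  exact ⟨fun j => f j a, fun j _ => ⟨a, rfl⟩, rfl⟩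

section

variable {ι : Type*} [DecidableEq ι] {A : ι → Type*}

def coordSection (R : Set (∀ i, A i)) (i : ι) (a : A i) : Set (∀ i, A i) :=
  {x | update x i a ∈ R}

theorem coordSection_iUnion {J : Type*} (R : J → Set (∀ i, A i)) (i : ι) (a : A i) :
    coordSection (⋃ j, R j) i a = ⋃ j, coordSection (R j) i a :=
  preimage_iUnion

theorem coordSection_univ_pi (S : ∀ i, Set (A i)) (i : ι) (a : A i) :
    coordSection (univ.pi S) i a = {x ∈ (univ \ {i}).pi S | a ∈ S i} := by
  ext x
  simp only [coordSection, mem_ofPred_eq, update_mem_pi_iff, mem_univ, forall_const]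

theorem finite_range_coordSection_univ_pi (S : ∀ i, Set (A i)) (i : ι) :
    (range (coordSection (univ.pi S) i)).Finite := by
  refine (toFinite {(univ \ {i}).pi S, ∅}).subset ?_
  rintro _ ⟨a, rfl⟩
  by_cases ha : a ∈ S i <;> simp only [coordSection_univ_pi, ha, sep_true, sep_false,
    mem_insert_iff, mem_singleton_iff, true_or, or_true]

theorem finite_range_coordSection_iUnion_univ_pi {J : Type*} [Finite J]
    (S : J → ∀ i, Set (A i)) (i : ι) :
    (range (coordSection (⋃ j, univ.pi (S j)) i)).Finite := by
  rw [show coordSection (⋃ j, univ.pi (S j)) i = _ from funext (coordSection_iUnion _ i)]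
  exact finite_range_iUnion fun j => finite_range_coordSection_univ_pi (S j) i

theorem mem_iff_mem_of_coordSection_eq [Finite ι] {R : Set (∀ i, A i)} {x y : ∀ i, A i}
    (h : ∀ i, coordSection R i (x i) = coordSection R i (y i)) : x ∈ R ↔ y ∈ R := by
  cases nonempty_fintype ι
  suffices ∀ s : Finset ι, x ∈ R ↔ s.piecewise y x ∈ R by
    simpa using this Finset.univ
  intro s
  induction s using Finset.induction_on with
  | empty => simp
  | insert i s hi ih =>
    rw [Finset.piecewise_insert, ih]
    change _ ∈ R ↔ s.piecewise y x ∈ coordSection R i (y i)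
    rw [← h i, coordSection, mem_ofPred_eq, ← Finset.piecewise_eq_of_notMem s y x hi,
      update_eq_self]

theorem eq_biUnion_univ_pi_coordSection [Finite ι] (R : Set (∀ i, A i)) :
    R = ⋃ p ∈ Pi.map (coordSection R) '' R,
      univ.pi fun i => {a | coordSection R i a = p i} := by
  ext x
  simp only [mem_iUnion, mem_image, mem_univ_pi, mem_ofPred_eq, exists_prop]
  constructor
  · exact fun hx => ⟨_, ⟨x, hx, rfl⟩, fun i => rfl⟩
  · rintro ⟨_, ⟨y, hy, rfl⟩, hxy⟩
    exact (mem_iff_mem_of_coordSection_eq hxy).2 hy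

theorem exists_fin_eq_iUnion_univ_pi [Finite ι] {R : Set (∀ i, A i)}
    (hR : ∀ i, (range (coordSection R i)).Finite) :
    ∃ (k : ℕ) (S : Fin k → ∀ i, Set (A i)), R = ⋃ j, univ.pi (S j) := by
  have hprofiles : (Pi.map (coordSection R) '' R).Finite :=
    (range_piMap (coordSection R) ▸ Finite.pi hR).subset (image_subset_range _ _)
  obtain ⟨k, f, hf⟩ := hprofiles.fin_embedding
  refine ⟨k, fun j i => {a | coordSection R i a = f j i}, ?_⟩
  rw [← biUnion_range (g := fun p : ∀ i, Set (∀ i, A i) =>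
    univ.pi fun i => {a | coordSection R i a = p i}), hf]
  exact eq_biUnion_univ_pi_coordSection R

end

/-- A relation `R` on a finite product `∀ i, A i` is a finite union of boxes iff
for every coordinate `i` the map `a ↦ { x | Function.update x i a ∈ R }` has
finite range. -/
theorem stmt_8 (n : ℕ) (A : Fin n → Type*) (R : Set (∀ i, A i)) :
    (∃ (k : ℕ) (S : Fin k → ∀ i, Set (A i)),
        R = ⋃ j, {x : ∀ i, A i | ∀ i, x i ∈ S j i}) ↔
      ∀ i : Fin n,
        (Set.range fun a : A i =>
          {x : ∀ j, A j | Function.update x i a ∈ R}).Finite := by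
  have boxes_eq_pi : ∀ {k : ℕ} (S : Fin k → ∀ i, Set (A i)),
      ⋃ j, {x : ∀ i, A i | ∀ i, x i ∈ S j i} = ⋃ j, univ.pi (S j) := by
    intro k S
    simp only [Set.pi, mem_univ, forall_const]
  constructor
  · rintro ⟨k, S, rfl⟩ i
    rw [boxes_eq_pi]
    exact finite_range_coordSection_iUnion_univ_pi S i
  · intro hR
    obtain ⟨k, S, hS⟩ := exists_fin_eq_iUnion_univ_pi hR
    exact ⟨k, S, hS.trans (boxes_eq_pi S).symm⟩
end

section
/- Let Y be a type, R ⊆ ℕ × Y, B ∈ ℕ, and let K be a finite set of positive natural numbers. Suppose that for all x₁, x₂ ≥ B such that x₁ ≡ x₂ (mod k) for every k ∈ K, and for all y ∈ Y, we have (x₁, y) ∈ R ↔ (x₂, y) ∈ R. Then R is a finite union of rectangles S ×ˢ T with S ⊆ ℕ and T ⊆ Y. -/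
/-!
Let `L` be the lcm of `K`. Folding every `x ≥ B` onto the representative of its class modulo `L`
in `[B, B + L)` gives a map `ℕ → Fin (B + L)` along which the fibers of `R` are constant, and a
relation whose fibers factor through a finite type is the union of the rectangles
`(preimage of i) × (fiber over i)`.
-/

open Set

theorem exists_eq_iUnion_fin_prod_of_mem_iff {X Y ι : Type*} [Finite ι] (R : Set (X × Y))
    (c : X → ι) (Q : ι → Set Y) (hR : ∀ x y, (x, y) ∈ R ↔ y ∈ Q (c x)) :
    ∃ (m : ℕ) (S : Fin m → Set X) (T : Fin m → Set Y), R = ⋃ i, S i ×ˢ T i := by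
  obtain ⟨m, ⟨e⟩⟩ := Finite.exists_equiv_fin ι
  refine ⟨m, fun i => c ⁻¹' {e.symm i}, fun i => Q (e.symm i), ?_⟩
  ext ⟨x, y⟩
  simp only [hR, mem_iUnion, mem_prod, mem_preimage, mem_singleton_iff]
  exact ⟨fun hy => ⟨e (c x), by simpa using hy⟩, fun ⟨i, hi, hy⟩ => hi ▸ hy⟩

namespace Nat

def foldModFrom (B L x : ℕ) : ℕ := if x < B then x else B + (x - B) % L

theorem foldModFrom_lt {B L : ℕ} (hL : 0 < L) (x : ℕ) : foldModFrom B L x < B + L := by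
  unfold foldModFrom
  split_ifs
  · omega
  · exact Nat.add_lt_add_left (Nat.mod_lt _ hL) B

theorem modEq_foldModFrom (B L x : ℕ) : x ≡ foldModFrom B L x [MOD L] := by
  unfold foldModFrom
  split_ifs with hx
  · rfl
  · calc x = B + (x - B) := by omega
      _ ≡ B + (x - B) % L [MOD L] := (Nat.ModEq.refl B).add (Nat.mod_modEq _ _).symm

theorem le_foldModFrom {B L x : ℕ} (hx : B ≤ x) : B ≤ foldModFrom B L x := by
  unfold foldModFrom
  split_ifs <;> omega

theorem foldModFrom_of_lt {B L x : ℕ} (hx : x < B) : foldModFrom B L x = x := if_pos hx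

end Nat

/-- Soundness of the decomposability criterion: if beyond a bound `B` the fibers
of `R ⊆ ℕ × Y` agree for arguments congruent modulo every `k ∈ K`, then `R` is a
finite union of rectangles. -/
theorem stmt_9 {Y : Type*} (R : Set (ℕ × Y)) (B : ℕ) (K : Finset ℕ)
    (hK : ∀ k ∈ K, 0 < k)
    (h : ∀ x₁ x₂ : ℕ, B ≤ x₁ → B ≤ x₂ → (∀ k ∈ K, x₁ ≡ x₂ [MOD k]) →
      ∀ y : Y, ((x₁, y) ∈ R ↔ (x₂, y) ∈ R)) :
    ∃ (m : ℕ) (S : Fin m → Set ℕ) (T : Fin m → Set Y),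
      R = ⋃ i, S i ×ˢ T i := by
  set L := K.lcm id
  have hL : 0 < L := Nat.pos_of_ne_zero fun h0 => by
    obtain ⟨k, hk, hk0⟩ := Finset.lcm_eq_zero_iff.mp h0
    exact (hK k hk).ne' hk0
  have hfold : ∀ x y, (x, y) ∈ R ↔ (Nat.foldModFrom B L x, y) ∈ R := by
    intro x y
    by_cases hx : x < B
    · rw [Nat.foldModFrom_of_lt hx]
    · exact h _ _ (not_lt.mp hx) (Nat.le_foldModFrom (not_lt.mp hx))
        (fun k hk => (Nat.modEq_foldModFrom B L x).of_dvd (Finset.dvd_lcm hk)) y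
  exact exists_eq_iUnion_fin_prod_of_mem_iff R
    (fun x => (⟨Nat.foldModFrom B L x, Nat.foldModFrom_lt hL x⟩ : Fin (B + L)))
    (fun i => {y | ((i : ℕ), y) ∈ R}) hfold
end

section
/- Let Y be a type, k ∈ ℕ, S : Fin k → Set ℕ, T : Fin k → Set Y, and R = ⋃_{i<k} S_i ×ˢ T_i ⊆ ℕ × Y. Suppose each S_i is eventually periodic, i.e., there exist B_i ∈ ℕ and m_i > 0 such that for all x ≥ B_i, x ∈ S_i ↔ x + m_i ∈ S_i. Then there exist B ∈ ℕ and m > 0 such that for all x₁, x₂ ≥ B with x₁ ≡ x₂ (mod m) and all y ∈ Y, we have (x₁, y) ∈ R ↔ (x₂, y) ∈ R. -/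
/-!
Taking the largest threshold and the product of the periods makes all the `S i` periodic with one
common threshold and period. Above that threshold, congruent arguments then lie in the same `S i`,
and membership of `(x, y)` in the union of rectangles depends on `x` only through which `S i`
contain it.
-/

def IsEventuallyPeriodicWith (S : Set ℕ) (B m : ℕ) : Prop :=
  ∀ x : ℕ, B ≤ x → (x ∈ S ↔ x + m ∈ S)

namespace IsEventuallyPeriodicWith

variable {S : Set ℕ} {B m : ℕ}

theorem add_mul_mem_iff (h : IsEventuallyPeriodicWith S B m) (c : ℕ) {x : ℕ} (hx : B ≤ x) :
    x ∈ S ↔ x + c * m ∈ S := by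
  induction c with
  | zero => simp
  | succ c ih =>
    rw [ih, h (x + c * m) (hx.trans (Nat.le_add_right _ _)), add_mul, one_mul, add_assoc]

theorem mono (h : IsEventuallyPeriodicWith S B m) {B' m' : ℕ} (hB : B ≤ B') (hm : m ∣ m') :
    IsEventuallyPeriodicWith S B' m' := by
  obtain ⟨d, rfl⟩ := hm
  intro x hx
  rw [mul_comm, h.add_mul_mem_iff d (hB.trans hx)]

theorem mem_iff_of_modEq (h : IsEventuallyPeriodicWith S B m) {x₁ x₂ : ℕ}
    (h₁ : B ≤ x₁) (h₂ : B ≤ x₂) (hmod : x₁ ≡ x₂ [MOD m]) : x₁ ∈ S ↔ x₂ ∈ S := by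
  wlog hle : x₁ ≤ x₂ generalizing x₁ x₂
  · exact (this h₂ h₁ hmod.symm (le_of_not_ge hle)).symm
  obtain ⟨c, hc⟩ := (Nat.modEq_iff_dvd' hle).mp hmod
  have hx₂ : x₂ = x₁ + c * m := by rw [mul_comm, ← hc, Nat.add_sub_cancel' hle]
  rw [hx₂, ← h.add_mul_mem_iff c h₁]

end IsEventuallyPeriodicWith

theorem exists_common_isEventuallyPeriodicWith {ι : Type*} [Fintype ι] {S : ι → Set ℕ}
    (h : ∀ i, ∃ B m, 0 < m ∧ IsEventuallyPeriodicWith (S i) B m) :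
    ∃ B m, 0 < m ∧ ∀ i, IsEventuallyPeriodicWith (S i) B m := by
  choose B m hm hS using h
  exact ⟨Finset.univ.sup B, ∏ i, m i, Finset.prod_pos fun i _ => hm i, fun i =>
    (hS i).mono (Finset.le_sup (Finset.mem_univ i)) (Finset.dvd_prod_of_mem m (Finset.mem_univ i))⟩

theorem mem_iUnion_prod_iff_of_forall_mem_iff {ι Y : Type*} {S : ι → Set ℕ} {T : ι → Set Y}
    {x₁ x₂ : ℕ} (h : ∀ i, x₁ ∈ S i ↔ x₂ ∈ S i) (y : Y) :
    (x₁, y) ∈ ⋃ i, S i ×ˢ T i ↔ (x₂, y) ∈ ⋃ i, S i ×ˢ T i := by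
  simp only [Set.mem_iUnion, Set.mem_prod]
  exact exists_congr fun i => and_congr_left' (h i)

/-- Completeness of the decomposability criterion: if `R = ⋃_{i<k} S i ×ˢ T i`
with each `S i` eventually periodic, then there are a bound `B` and a period
`m > 0` such that the fibers of `R` agree on arguments `≥ B` that are congruent
modulo `m`. -/
theorem stmt_10 {Y : Type*} (k : ℕ) (S : Fin k → Set ℕ) (T : Fin k → Set Y)
    (R : Set (ℕ × Y)) (hR : R = ⋃ i, S i ×ˢ T i)
    (hper : ∀ i : Fin k, ∃ (B : ℕ) (m : ℕ), 0 < m ∧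
      ∀ x : ℕ, B ≤ x → (x ∈ S i ↔ x + m ∈ S i)) :
    ∃ (B : ℕ) (m : ℕ), 0 < m ∧
      ∀ x₁ x₂ : ℕ, B ≤ x₁ → B ≤ x₂ → x₁ ≡ x₂ [MOD m] →
        ∀ y : Y, ((x₁, y) ∈ R ↔ (x₂, y) ∈ R) := by
  obtain ⟨B, m, hm, hS⟩ := exists_common_isEventuallyPeriodicWith hper
  refine ⟨B, m, hm, fun x₁ x₂ h₁ h₂ hmod y => ?_⟩
  subst hR
  exact mem_iUnion_prod_iff_of_forall_mem_iff (fun i => (hS i).mem_iff_of_modEq h₁ h₂ hmod) y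
end

section
/- Let L be the first-order language with a single binary function symbol and no other symbols, and regard ℕ as an L-structure by interpreting the binary function symbol as addition. Then every subset S ⊆ ℕ that is definable in this structure with parameters from ℕ is eventually periodic: there exist B ∈ ℕ and m > 0 such that for all x ≥ B, x ∈ S ↔ x + m ∈ S. -/
/-- The first-order language with a single binary function symbol and no other
symbols. -/
def addLang : FirstOrder.Language :=
  ⟨fun n => PLift (n = 2), fun _ => Empty⟩

/-- `ℕ` as an `addLang`-structure, interpreting the binary function symbol as
addition. -/
instance natAddStructure : addLang.Structure ℕ where
  funMap {n} f x :=
    x ⟨0, by have h := f.down; omega⟩ + x ⟨1, by have h := f.down; omega⟩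
  RelMap {n} r := r.elim

/-!
Cooper's quantifier elimination. Every formula of `(ℕ, +)` is equivalent to a quantifier-free
combination of atoms `0 ≤ f` and `d ∣ f` with `f` affine. To eliminate `∃ x`, look at the least
witness `n`. Lowering `x` by a common multiple `D` of the moduli preserves every divisibility atom
and every inequality that does not bound `x` from below, so `n - D` can only fail to be a witness
when `n < D` or `a * n + s ∈ [0, a * D)` for some lower bound `0 ≤ a * x + s`. This leaves finitely
many candidate values of `a * n`, which are substituted after multiplying through by `a`.
In one variable, every atom is eventually constant or periodic, hence so is every formula.
-/

namespace Function

variable {α β γ : Type*}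

def EventuallyPeriodic (f : ℕ → α) : Prop :=
  ∃ B m, 0 < m ∧ ∀ n, B ≤ n → f (n + m) = f n

theorem Periodic.eventuallyPeriodic {f : ℕ → α} {m : ℕ} (h : Periodic f m) (hm : 0 < m) :
    EventuallyPeriodic f :=
  ⟨0, m, hm, fun n _ => h n⟩

theorem apply_add_mul_eq {f : ℕ → α} {B m : ℕ} (h : ∀ n, B ≤ n → f (n + m) = f n) (k : ℕ)
    {n : ℕ} (hn : B ≤ n) : f (n + m * k) = f n := by
  induction k with
  | zero => simp
  | succ k ih => rw [Nat.mul_succ, ← add_assoc, h _ (by omega), ih]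

theorem EventuallyPeriodic.map₂ {f : ℕ → α} {f' : ℕ → β} (g : α → β → γ)
    (hf : EventuallyPeriodic f) (hf' : EventuallyPeriodic f') :
    EventuallyPeriodic fun n => g (f n) (f' n) := by
  obtain ⟨B, m, hm, h⟩ := hf
  obtain ⟨B', m', hm', h'⟩ := hf'
  refine ⟨max B B', m * m', Nat.mul_pos hm hm', fun n hn => ?_⟩
  dsimp only
  rw [apply_add_mul_eq h m' (le_of_max_le_left hn), mul_comm,
    apply_add_mul_eq h' m (le_of_max_le_right hn)]

end Function

open Function

theorem eventuallyPeriodic_nonneg_mul_add (a c : ℤ) :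
    EventuallyPeriodic fun n : ℕ => 0 ≤ a * n + c := by
  refine ⟨c.natAbs + 1, 1, one_pos, fun n hn => ?_⟩
  have hn : |c| < n := by rw [Int.abs_eq_natAbs]; omega
  have hc := le_abs_self c
  have hc' := neg_abs_le c
  push_cast
  rcases lt_trichotomy a 0 with ha | rfl | ha
  · exact propext (iff_of_false (by nlinarith) (by nlinarith))
  · simp
  · exact propext (iff_of_true (by nlinarith) (by nlinarith))

theorem periodic_dvd_mul_add (d : ℕ) (a c : ℤ) :
    Periodic (fun n : ℕ => (d : ℤ) ∣ a * n + c) d := by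
  intro n
  simp only [Nat.cast_add, mul_add, add_right_comm _ (a * d) c]
  exact propext (dvd_add_left (dvd_mul_left _ _))

noncomputable section

namespace Presburger

abbrev AffineForm (ι : Type*) := (ι →₀ ℤ) × ℤ

namespace AffineForm

variable {ι : Type*}

def eval (v : ι → ℕ) : AffineForm ι →ₗ[ℤ] ℤ :=
  (Finsupp.linearCombination ℤ fun i => (v i : ℤ)).coprod LinearMap.id

def const (k : ℤ) : AffineForm ι := (0, k)

def var (i : ι) : AffineForm ι := (Finsupp.single i 1, 0)

def erase (i : ι) (f : AffineForm ι) : AffineForm ι := (f.1.erase i, f.2)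

@[simp] theorem eval_const (v : ι → ℕ) (k : ℤ) : eval v (const k) = k := by
  simp [eval, const]

@[simp] theorem eval_var (v : ι → ℕ) (i : ι) : eval v (var i) = v i := by
  simp [eval, var]

theorem eval_update [DecidableEq ι] (v : ι → ℕ) (i : ι) (n : ℕ) (f : AffineForm ι) :
    eval (update v i n) f = f.1 i * n + eval v (erase i f) := by
  have hrest : Finsupp.linearCombination ℤ (fun j => (update v i n j : ℤ)) (f.1.erase i)
      = Finsupp.linearCombination ℤ (fun j => (v j : ℤ)) (f.1.erase i) := by
    simp only [Finsupp.linearCombination_apply]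
    refine Finsupp.sum_congr fun j hj => ?_
    rw [Finsupp.support_erase, Finset.mem_erase] at hj
    rw [update_of_ne hj.1]
  obtain ⟨g, k⟩ := f
  conv_lhs => rw [← Finsupp.single_add_erase i g]
  simp [eval, erase, hrest, add_assoc]

theorem eval_update_add [DecidableEq ι] (v : ι → ℕ) (i : ι) (n D : ℕ) (f : AffineForm ι) :
    eval (update v i (n + D)) f = eval (update v i n) f + f.1 i * D := by
  rw [eval_update, eval_update]
  push_cast
  ring

def substDiv (i : ι) (u : AffineForm ι) (a : ℤ) (f : AffineForm ι) : AffineForm ι :=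
  f.1 i • u + a • erase i f

theorem eval_substDiv [DecidableEq ι] {v : ι → ℕ} {i : ι} {u : AffineForm ι} {a : ℤ} {n : ℕ}
    (hu : eval v u = a * n) (f : AffineForm ι) :
    eval v (substDiv i u a f) = a * eval (update v i n) f := by
  rw [substDiv, map_add, map_zsmul, map_zsmul, hu, eval_update, smul_eq_mul, smul_eq_mul]
  ring

end AffineForm

open AffineForm

inductive QFormula (ι : Type*)
  | le (f : AffineForm ι)
  | dvd (d : ℕ+) (f : AffineForm ι)
  | ndvd (d : ℕ+) (f : AffineForm ι)
  | and (φ ψ : QFormula ι)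
  | or (φ ψ : QFormula ι)

namespace QFormula

variable {ι : Type*}

def Sat : QFormula ι → (ι → ℕ) → Prop
  | le f, v => 0 ≤ eval v f
  | dvd d f, v => (d : ℤ) ∣ eval v f
  | ndvd d f, v => ¬(d : ℤ) ∣ eval v f
  | and φ ψ, v => φ.Sat v ∧ ψ.Sat v
  | or φ ψ, v => φ.Sat v ∨ ψ.Sat v

def fls : QFormula ι := le (const (-1))

@[simp] theorem not_sat_fls (v : ι → ℕ) : ¬(fls : QFormula ι).Sat v := by
  simp [fls, Sat]

def not : QFormula ι → QFormula ι
  | le f => le (const (-1) - f)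
  | dvd d f => ndvd d f
  | ndvd d f => dvd d f
  | and φ ψ => or φ.not ψ.not
  | or φ ψ => and φ.not ψ.not

@[simp] theorem sat_not (φ : QFormula ι) (v : ι → ℕ) : φ.not.Sat v ↔ ¬φ.Sat v := by
  induction φ with
  | le f => simp only [not, Sat, map_sub, eval_const]; omega
  | dvd d f => simp [not, Sat]
  | ndvd d f => simp [not, Sat]
  | and φ ψ ihφ ihψ => simp only [not, Sat, ihφ, ihψ]; tauto
  | or φ ψ ihφ ihψ => simp only [not, Sat, ihφ, ihψ]; tauto

def bigOr (l : List (QFormula ι)) : QFormula ι := l.foldr or fls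

@[simp] theorem sat_bigOr (l : List (QFormula ι)) (v : ι → ℕ) :
    (bigOr l).Sat v ↔ ∃ φ ∈ l, φ.Sat v := by
  induction l with
  | nil => simp [bigOr]
  | cons φ l ih => simp [bigOr, Sat, ← ih]

def period : QFormula ι → ℕ+
  | le _ => 1
  | dvd d _ | ndvd d _ => d
  | and φ ψ | or φ ψ => period φ * period ψ

/-- The atoms `0 ≤ a * x_i + s` of `φ` with `a > 0`, as pairs `(a, s)`. -/
def lowerBoundAtoms (i : ι) : QFormula ι → List (ℕ+ × AffineForm ι)
  | le f => if h : 0 < f.1 i then [(⟨(f.1 i).toNat, by omega⟩, erase i f)] else []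
  | dvd _ _ | ndvd _ _ => []
  | and φ ψ | or φ ψ => lowerBoundAtoms i φ ++ lowerBoundAtoms i ψ

/-- `φ[x_i := u / a]`, each atom multiplied through by `a`. -/
def substDiv (i : ι) (u : AffineForm ι) (a : ℕ+) : QFormula ι → QFormula ι
  | le f => le (AffineForm.substDiv i u a f)
  | dvd d f => dvd (a * d) (AffineForm.substDiv i u a f)
  | ndvd d f => ndvd (a * d) (AffineForm.substDiv i u a f)
  | and φ ψ => and (φ.substDiv i u a) (ψ.substDiv i u a)
  | or φ ψ => or (φ.substDiv i u a) (ψ.substDiv i u a)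

def cooperCase (i : ι) (φ : QFormula ι) (a : ℕ+) (s : AffineForm ι) (j : ℕ) : QFormula ι :=
  and (dvd a (const j - s)) (and (le (const j - s)) (φ.substDiv i (const j - s) a))

-- The pair `(1, 0)` stands for the bound `0 ≤ x_i`; it catches witnesses below the period.
def cooper (i : ι) (φ : QFormula ι) : QFormula ι :=
  bigOr <| ((1, 0) :: lowerBoundAtoms i φ).flatMap fun p =>
    (List.range (p.1 * period φ : ℕ+)).map (cooperCase i φ p.1 p.2)

variable [DecidableEq ι]

theorem sat_substDiv {v : ι → ℕ} {i : ι} {u : AffineForm ι} {a : ℕ+} {n : ℕ}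
    (hu : eval v u = a * n) (φ : QFormula ι) :
    (φ.substDiv i u a).Sat v ↔ φ.Sat (update v i n) := by
  have ha : (0 : ℤ) < a := by positivity
  induction φ with
  | le f => simp [substDiv, Sat, eval_substDiv hu, mul_nonneg_iff_of_pos_left ha]
  | dvd d f => simp [substDiv, Sat, eval_substDiv hu, mul_dvd_mul_iff_left ha.ne']
  | ndvd d f => simp [substDiv, Sat, eval_substDiv hu, mul_dvd_mul_iff_left ha.ne']
  | and φ ψ ihφ ihψ => exact and_congr ihφ ihψ
  | or φ ψ ihφ ihψ => exact or_congr ihφ ihψ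

theorem sat_of_sat_add_period {i : ι} {v : ι → ℕ} {x D : ℕ} {φ : QFormula ι}
    (hD : (period φ : ℕ) ∣ D) (h : φ.Sat (update v i (x + D)))
    (hlb : ∀ p ∈ lowerBoundAtoms i φ,
      0 ≤ (p.1 : ℤ) * (x + D : ℕ) + eval v p.2 → 0 ≤ (p.1 : ℤ) * x + eval v p.2) :
    φ.Sat (update v i x) := by
  induction φ with
  | le f =>
    simp only [Sat, eval_update_add] at h ⊢
    by_cases ha : 0 < f.1 i
    · have hbound := hlb (⟨(f.1 i).toNat, by omega⟩, erase i f) (by simp [lowerBoundAtoms, ha])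
      simp only [PNat.mk_coe, Int.toNat_of_nonneg ha.le] at hbound
      rw [eval_update] at h ⊢
      push_cast at h hbound ⊢
      linarith [hbound (by linarith)]
    · nlinarith
  | dvd d f =>
    have hdD : (d : ℤ) ∣ f.1 i * D := dvd_mul_of_dvd_right (by exact_mod_cast hD) _
    simp only [Sat, eval_update_add] at h ⊢
    exact (dvd_add_left hdD).1 h
  | ndvd d f =>
    have hdD : (d : ℤ) ∣ f.1 i * D := dvd_mul_of_dvd_right (by exact_mod_cast hD) _
    simp only [Sat, eval_update_add] at h ⊢
    exact mt (dvd_add_left hdD).2 h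
  | and φ ψ ihφ ihψ =>
    simp only [period, PNat.mul_coe] at hD
    simp only [lowerBoundAtoms, List.mem_append] at hlb
    exact ⟨ihφ (dvd_of_mul_right_dvd hD) h.1 fun p hp => hlb p (.inl hp),
      ihψ (dvd_of_mul_left_dvd hD) h.2 fun p hp => hlb p (.inr hp)⟩
  | or φ ψ ihφ ihψ =>
    simp only [period, PNat.mul_coe] at hD
    simp only [lowerBoundAtoms, List.mem_append] at hlb
    exact h.imp (ihφ (dvd_of_mul_right_dvd hD) · fun p hp => hlb p (.inl hp))
      (ihψ (dvd_of_mul_left_dvd hD) · fun p hp => hlb p (.inr hp))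

theorem sat_cooperCase {i : ι} {φ : QFormula ι} {a : ℕ+} {s : AffineForm ι} {j : ℕ}
    {v : ι → ℕ} :
    (cooperCase i φ a s j).Sat v ↔
      ∃ n : ℕ, (a : ℤ) * n + eval v s = j ∧ φ.Sat (update v i n) := by
  simp only [cooperCase, Sat, map_sub, eval_const]
  constructor
  · rintro ⟨⟨k, hk⟩, hle, hφ⟩
    have hk0 : 0 ≤ k := nonneg_of_mul_nonneg_right (hk ▸ hle) (by positivity)
    refine ⟨k.toNat, ?_, (sat_substDiv ?_ φ).1 hφ⟩ <;> simp [hk0] <;> linarith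
  · rintro ⟨n, hn, hφ⟩
    have hu : (j : ℤ) - eval v s = a * n := by linarith
    exact ⟨⟨n, hu⟩, hu ▸ by positivity, (sat_substDiv (by simpa using hu) φ).2 hφ⟩

theorem exists_lowerBoundAtom_window {i : ι} {v : ι → ℕ} {φ : QFormula ι} {n : ℕ}
    (hn : φ.Sat (update v i n)) (hmin : ∀ m < n, ¬φ.Sat (update v i m)) :
    ∃ p ∈ ((1, 0) :: lowerBoundAtoms i φ), 0 ≤ (p.1 : ℤ) * n + eval v p.2 ∧
      (p.1 : ℤ) * n + eval v p.2 < (p.1 * period φ : ℕ+) := by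
  by_cases hsmall : n < period φ
  · exact ⟨(1, 0), List.mem_cons_self, by simp [hsmall]⟩
  obtain ⟨y, rfl⟩ : ∃ y, n = y + period φ := ⟨n - period φ, by omega⟩
  by_contra! hfar
  refine hmin y (by simp) (sat_of_sat_add_period dvd_rfl hn fun p hp h0 => ?_)
  have hfar' := hfar p (List.mem_cons_of_mem _ hp) h0
  push_cast at hfar' h0 ⊢
  linarith

theorem sat_cooper {i : ι} {φ : QFormula ι} {v : ι → ℕ} :
    (cooper i φ).Sat v ↔ ∃ n, φ.Sat (update v i n) := by
  simp only [cooper, sat_bigOr, List.mem_flatMap, List.mem_map, List.mem_range]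
  constructor
  · rintro ⟨_, ⟨p, -, j, -, rfl⟩, h⟩
    obtain ⟨n, -, hn⟩ := sat_cooperCase.1 h
    exact ⟨n, hn⟩
  · intro hex
    classical
    obtain ⟨p, hp, h0, hlt⟩ :=
      exists_lowerBoundAtom_window (Nat.find_spec hex) fun m => Nat.find_min hex
    refine ⟨_, ⟨p, hp, (p.1 * Nat.find hex + eval v p.2).toNat, by omega, rfl⟩,
      sat_cooperCase.2 ⟨Nat.find hex, by omega, Nat.find_spec hex⟩⟩

theorem eventuallyPeriodic_sat (φ : QFormula ι) (v : ι → ℕ) (i : ι) :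
    EventuallyPeriodic fun n => φ.Sat (update v i n) := by
  induction φ with
  | le f => simpa only [Sat, eval_update] using eventuallyPeriodic_nonneg_mul_add _ _
  | dvd d f =>
    simpa only [Sat, eval_update] using (periodic_dvd_mul_add (d : ℕ) _ _).eventuallyPeriodic d.pos
  | ndvd d f =>
    simpa only [Sat, eval_update, comp_def] using
      ((periodic_dvd_mul_add (d : ℕ) _ _).comp Not).eventuallyPeriodic d.pos
  | and φ ψ ihφ ihψ => exact ihφ.map₂ (· ∧ ·) ihψ
  | or φ ψ ihφ ihψ => exact ihφ.map₂ (· ∨ ·) ihψ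

end QFormula

open FirstOrder Language

theorem exists_affineForm_eq_realize {β ι : Type*} (g : β → ι) (t : addLang.Term β) :
    ∃ f : AffineForm ι, ∀ w : ι → ℕ, eval w f = t.realize (w ∘ g) := by
  classical
  induction t with
  | var b => exact ⟨var (g b), fun w => by simp⟩
  | func f ts ih =>
    obtain ⟨rfl⟩ := f
    obtain ⟨f₀, hf₀⟩ := ih 0
    obtain ⟨f₁, hf₁⟩ := ih 1
    refine ⟨f₀ + f₁, fun w => ?_⟩
    change _ = (((ts 0).realize (w ∘ g) + (ts 1).realize (w ∘ g) : ℕ) : ℤ)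
    rw [map_add, hf₀, hf₁, Nat.cast_add]

-- The bound variable `k` is read at `Sum.inr k`, so one variable type serves every depth `n`.
theorem exists_qFormula_iff_realize {α : Type*} {n : ℕ} (φ : addLang.BoundedFormula α n) :
    ∃ ψ : QFormula (α ⊕ ℕ), ∀ w, ψ.Sat w ↔ φ.Realize (w ∘ Sum.inl) (w ∘ Sum.inr ∘ Fin.val) := by
  classical
  have hval : ∀ {n} (w : α ⊕ ℕ → ℕ), w ∘ Sum.map id (Fin.val (n := n)) =
      Sum.elim (w ∘ Sum.inl) (w ∘ Sum.inr ∘ Fin.val) := by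
    intro n w; funext x; cases x <;> rfl
  induction φ with
  | falsum => exact ⟨.fls, fun w => by simp [BoundedFormula.Realize]⟩
  | equal t₁ t₂ =>
    obtain ⟨f₁, hf₁⟩ := exists_affineForm_eq_realize (Sum.map id Fin.val) t₁
    obtain ⟨f₂, hf₂⟩ := exists_affineForm_eq_realize (Sum.map id Fin.val) t₂
    refine ⟨.and (.le (f₁ - f₂)) (.le (f₂ - f₁)), fun w => ?_⟩
    simp only [QFormula.Sat, map_sub, hf₁, hf₂, hval, BoundedFormula.Realize]
    omega
  | rel R _ => exact R.elim
  | imp φ₁ φ₂ ih₁ ih₂ =>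
    obtain ⟨ψ₁, hψ₁⟩ := ih₁
    obtain ⟨ψ₂, hψ₂⟩ := ih₂
    refine ⟨.or ψ₁.not ψ₂, fun w => ?_⟩
    simp only [QFormula.Sat, QFormula.sat_not, hψ₁, hψ₂, BoundedFormula.realize_imp]
    tauto
  | @all n θ ih =>
    obtain ⟨ψ, hψ⟩ := ih
    refine ⟨(ψ.not.cooper (Sum.inr n)).not, fun w => ?_⟩
    have hsnoc : ∀ x, (update w (Sum.inr n) x ∘ Sum.inr ∘ Fin.val : Fin (n + 1) → ℕ) =
        Fin.snoc (α := fun _ => ℕ) (w ∘ Sum.inr ∘ Fin.val) x := by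
      intro x; funext k
      refine Fin.lastCases ?_ (fun j => ?_) k
      · simp
      · simp [j.isLt.ne]
    have hinl : ∀ x, update w (Sum.inr n) x ∘ Sum.inl = w ∘ Sum.inl := by
      intro x; funext a; simp
    simp [QFormula.sat_cooper, hψ, hsnoc, hinl, BoundedFormula.realize_all]

end Presburger
end

open Presburger FirstOrder Language in
/-- Every subset of `ℕ` definable with parameters in the structure `(ℕ, +)` is
eventually periodic. -/
theorem stmt_11 (S : Set ℕ) (hS : (Set.univ : Set ℕ).Definable₁ addLang S) :
    ∃ (B m : ℕ), 0 < m ∧ ∀ x : ℕ, B ≤ x → (x ∈ S ↔ x + m ∈ S) := by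
  classical
  obtain ⟨φ, hφ⟩ := Set.definable_iff_exists_formula_sum.1 hS
  obtain ⟨ψ, hψ⟩ := exists_qFormula_iff_realize φ
  let w₀ : ((Set.univ : Set ℕ) ⊕ Fin 1) ⊕ ℕ → ℕ := Sum.elim (Sum.elim (↑) 0) 0
  have hmem : ∀ x, x ∈ S ↔ ψ.Sat (update w₀ (Sum.inl (Sum.inr 0)) x) := by
    intro x
    have hw : update w₀ (Sum.inl (Sum.inr 0)) x = Sum.elim (Sum.elim (↑) fun _ => x) 0 := by
      funext y
      rcases y with (a | j) | k <;> simp [w₀, Fin.fin_one_eq_zero]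
    have h := Set.ext_iff.1 hφ fun _ => x
    rw [hw, hψ, Sum.elim_comp_inl]
    exact h.trans (iff_of_eq (congrArg (BoundedFormula.Realize φ _) (Subsingleton.elim _ _)))
  obtain ⟨B, m, hm, hper⟩ := ψ.eventuallyPeriodic_sat w₀ (Sum.inl (Sum.inr 0))
  exact ⟨B, m, hm, fun x hx => by rw [hmem, hmem]; exact iff_of_eq (hper x hx).symm⟩
end

section
/- Let L be the first-order language with a single binary function symbol, regard ℕ as an L-structure interpreting the symbol as addition, and let R ⊆ ℕ × ℕ be definable with parameters in this structure. Then R is a finite union of rectangles if and only if there exist B ∈ ℕ and m > 0 such that for all x₁, x₂ ≥ B with x₁ ≡ x₂ (mod m) and all y ∈ ℕ, we have (x₁, y) ∈ R ↔ (x₂, y) ∈ R. -/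
/-!
Every set definable in `(ℕ, +)` is definable in Presburger arithmetic, hence semilinear, so each
column `{x | (x, y) ∈ R}` is ultimately periodic. A relation is a finite union of rectangles iff
its rows `{y | (x, y) ∈ R}` take only finitely many values. Finitely many distinct rows are told
apart by finitely many `y`; a common threshold and period for those columns then makes rows with
large congruent indices equal. Conversely, under the periodicity condition every row is one of the
rows indexed below `B + m`.
-/

open FirstOrder Language Set

def addLang.toPresburger : addLang →ᴸ presburger where
  onFunction _ f := f.down ▸ presburgerFunc.add
  onRelation _ r := r.elim

instance addLang.isExpansionOn_toPresburger : addLang.toPresburger.IsExpansionOn ℕ where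
  map_onFunction := by
    rintro n ⟨rfl⟩ x
    rfl
  map_onRelation r := r.elim

theorem Set.Definable₂.definable₁_fiber {L : Language} {M : Type*} [L.Structure M] {A : Set M}
    {R : Set (M × M)} (hR : A.Definable₂ L R) {b : M} (hb : b ∈ A) :
    A.Definable₁ L {a | (a, b) ∈ R} := by
  have hF : A.DefinableMap L fun x : Fin 1 → M => ![x 0, b] := by
    intro i
    fin_cases i
    · exact DefinableFun.proj L
    · exact L.definableFun_const _ hb
  exact hR.preimage_map hF

/-- Congruence modulo `0` is equality, so `UltimatelyPeriodic f B 0` holds trivially: the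
period always comes with `0 < m`. -/
def UltimatelyPeriodic {γ : Type*} (f : ℕ → γ) (B m : ℕ) : Prop :=
  ∀ ⦃x₁ x₂⦄, B ≤ x₁ → B ≤ x₂ → x₁ ≡ x₂ [MOD m] → f x₁ = f x₂

namespace UltimatelyPeriodic

variable {γ : Type*} {f : ℕ → γ} {B m : ℕ}

theorem mono (h : UltimatelyPeriodic f B m) {B' m' : ℕ} (hB : B ≤ B') (hm : m ∣ m') :
    UltimatelyPeriodic f B' m' :=
  fun _ _ h₁ h₂ hx => h (hB.trans h₁) (hB.trans h₂) (hx.of_dvd hm)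

theorem of_forall_add (h : ∀ x, B ≤ x → f (x + m) = f x) : UltimatelyPeriodic f B m := by
  have shift : ∀ x, B ≤ x → ∀ t, f (x + m * t) = f x := by
    intro x hx t
    induction t with
    | zero => rfl
    | succ t ih => rw [Nat.mul_succ, ← add_assoc, h _ (by omega), ih]
  intro x₁ x₂ h₁ h₂ hx
  wlog hle : x₁ ≤ x₂ generalizing x₁ x₂
  · exact (this h₂ h₁ hx.symm (by omega)).symm
  obtain ⟨t, ht⟩ := (Nat.modEq_iff_dvd' hle).1 hx
  rw [show x₂ = x₁ + m * t by omega, shift x₁ h₁]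

theorem finite_range (h : UltimatelyPeriodic f B m) (hm : 0 < m) : (range f).Finite := by
  refine ((finite_Iio (B + m)).image f).subset ?_
  rintro _ ⟨x, rfl⟩
  by_cases hx : x < B
  · exact ⟨x, by simp only [mem_Iio]; omega, rfl⟩
  have hrep : B + (x - B) % m ≡ x [MOD m] := by
    simpa [Nat.add_sub_cancel' (not_lt.1 hx)] using (Nat.mod_modEq (x - B) m).add_left B
  exact ⟨B + (x - B) % m, by simp only [mem_Iio]; have := Nat.mod_lt (x - B) hm; omega,
    h (by omega) (not_lt.1 hx) hrep⟩

end UltimatelyPeriodic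

theorem ultimatelyPeriodic_pi {ι γ : Type*} [Finite ι] {f : ℕ → ι → γ}
    (h : ∀ i, ∃ B m, 0 < m ∧ UltimatelyPeriodic (f · i) B m) :
    ∃ B m, 0 < m ∧ UltimatelyPeriodic f B m := by
  have := Fintype.ofFinite ι
  choose B m hm hf using h
  refine ⟨Finset.univ.sup B, ∏ i, m i, Finset.prod_pos fun i _ => hm i, ?_⟩
  intro x₁ x₂ h₁ h₂ hx
  funext i
  exact (hf i).mono (Finset.le_sup (Finset.mem_univ i))
    (Finset.dvd_prod_of_mem m (Finset.mem_univ i)) h₁ h₂ hx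

theorem Set.Definable₁.ultimatelyPeriodic {A s : Set ℕ} (hs : A.Definable₁ presburger s) :
    ∃ B m, 0 < m ∧ UltimatelyPeriodic (· ∈ s) B m := by
  obtain ⟨B, m, hm, h⟩ := presburger.definable₁_iff_ultimately_periodic.1 hs
  exact ⟨B, m, hm, .of_forall_add fun x hx => propext (h x hx).symm⟩

theorem exists_fin_rectangles_iff_finite_range_rows {α β : Type*} {R : Set (α × β)} :
    (∃ (k : ℕ) (S : Fin k → Set α) (T : Fin k → Set β), R = ⋃ i, S i ×ˢ T i) ↔
      (range fun x => Prod.mk x ⁻¹' R).Finite := by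
  constructor
  · rintro ⟨k, S, T, rfl⟩
    refine (finite_range fun J : Set (Fin k) => ⋃ i ∈ J, T i).subset ?_
    rintro _ ⟨x, rfl⟩
    exact ⟨{i | x ∈ S i}, by ext y; simp⟩
  · intro hF
    have := hF.to_subtype
    let e := Finite.equivFin (range fun x => Prod.mk x ⁻¹' R)
    refine ⟨_, fun i => {x | Prod.mk x ⁻¹' R = e.symm i}, fun i => e.symm i, ?_⟩
    ext ⟨x, y⟩
    simp only [mem_iUnion, mem_prod, mem_ofPred_eq]
    constructor
    · intro hxy
      exact ⟨e ⟨_, mem_range_self x⟩, by rw [e.symm_apply_apply], by rwa [e.symm_apply_apply]⟩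
    · rintro ⟨i, hi, hy⟩
      rwa [← hi] at hy

theorem exists_finset_separating_of_finite_range {α β : Type*} {f : α → Set β}
    (hf : (range f).Finite) :
    ∃ Y : Finset β, ∀ a₁ a₂, (∀ y ∈ Y, y ∈ f a₁ ↔ y ∈ f a₂) → f a₁ = f a₂ := by
  have := hf.to_subtype
  have hwit (p : {p : range f × range f // p.1 ≠ p.2}) : ∃ y, ¬(y ∈ p.1.1.1 ↔ y ∈ p.1.2.1) :=
    not_forall.1 fun h => p.2 (Subtype.ext (Set.ext h))
  choose g hg using hwit
  refine ⟨(finite_range g).toFinset, fun a₁ a₂ h => ?_⟩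
  by_contra hne
  let p : {p : range f × range f // p.1 ≠ p.2} :=
    ⟨(⟨f a₁, mem_range_self a₁⟩, ⟨f a₂, mem_range_self a₂⟩), fun h => hne (congrArg Subtype.val h)⟩
  exact hg p (h (g p) (by simp))

/-- A binary relation on `ℕ` definable with parameters in `(ℕ, +)` is a finite
union of rectangles iff beyond some bound `B` its fibers agree on first
arguments congruent modulo some `m > 0`. -/
theorem stmt_12 (R : Set (ℕ × ℕ)) (hR : (Set.univ : Set ℕ).Definable₂ addLang R) :
    (∃ (k : ℕ) (S T : Fin k → Set ℕ), R = ⋃ i, S i ×ˢ T i) ↔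
      ∃ (B m : ℕ), 0 < m ∧
        ∀ x₁ x₂ : ℕ, B ≤ x₁ → B ≤ x₂ → x₁ ≡ x₂ [MOD m] →
          ∀ y : ℕ, ((x₁, y) ∈ R ↔ (x₂, y) ∈ R) := by
  have hR' : univ.Definable₂ presburger R := hR.map_expansion addLang.toPresburger
  rw [exists_fin_rectangles_iff_finite_range_rows]
  constructor
  · intro hrows
    obtain ⟨Y, hY⟩ := exists_finset_separating_of_finite_range hrows
    have hcols (y : Y) : ∃ B m, 0 < m ∧ UltimatelyPeriodic (fun x => (x, (y : ℕ)) ∈ R) B m :=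
      (hR'.definable₁_fiber (mem_univ y)).ultimatelyPeriodic
    obtain ⟨B, m, hm, hper⟩ := ultimatelyPeriodic_pi hcols
    refine ⟨B, m, hm, fun x₁ x₂ h₁ h₂ hx => Set.ext_iff.1 (hY x₁ x₂ fun y hy => ?_)⟩
    exact (congrFun (hper h₁ h₂ hx) ⟨y, hy⟩).to_iff
  · rintro ⟨B, m, hm, h⟩
    exact UltimatelyPeriodic.finite_range (fun x₁ x₂ h₁ h₂ hx => Set.ext (h x₁ x₂ h₁ h₂ hx)) hm
end

section
/- Let m, n ∈ ℕ, let A : Fin m → Fin n → ℤ and c : Fin m → ℤ, and let a ∈ ℕ satisfy |A j i| ≤ a for all j, i and |c j| ≤ a for all j. Let S = { x : Fin n → ℕ | ∀ j, ∑_i A j i · (x i) = c j } be the set of natural-number solutions of this system of m linear equations. If there exists x ∈ S and a coordinate i with x i > ((m + 2)·a + 1)^n, then S is infinite. -/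
/-!
If the homogeneous system `A u = 0` has a nonzero nonnegative rational solution, clearing
denominators turns it into a nonzero natural vector `w`, and `x + t • w` is a solution for
every `t : ℕ`.

Otherwise every nonnegative solution `x` is bounded, by induction on its support. If the columns
of `A` on the support are independent, some square submatrix on these columns is nonsingular,
and Cramer's rule with `1 ≤ |det|` bounds `x` by `k! aᵏ ≤ (m a + 1)ⁿ`, where `k ≤ m` is the size
of the support. Otherwise a kernel vector `u` supported there has entries of both signs; moving
from `x` along `u` and along `-u` until a coordinate vanishes gives two nonnegative solutions of
smaller support, and in each coordinate one of them dominates `x`.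
-/

open Matrix

theorem Nat.factorial_mul_pow_le_pow {k m : ℕ} (hkm : k ≤ m) (a : ℕ) :
    k.factorial * a ^ k ≤ (m * a + 1) ^ k :=
  calc k.factorial * a ^ k ≤ (k * a) ^ k := by
        rw [mul_pow]; exact Nat.mul_le_mul_right _ k.factorial_le_pow
    _ ≤ (m * a + 1) ^ k := Nat.pow_le_pow_left (by nlinarith) k

theorem Rat.exists_nat_mul_eq_natCast {ι : Type*} [Fintype ι] {u : ι → ℚ} (hu : 0 ≤ u) :
    ∃ d : ℕ, 0 < d ∧ ∃ w : ι → ℕ, ∀ i, (w i : ℚ) = d * u i := by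
  refine ⟨∏ i, (u i).den, Finset.prod_pos fun i _ ↦ (u i).den_pos,
    fun i ↦ (u i).num.toNat * ((∏ i, (u i).den) / (u i).den), fun i ↦ ?_⟩
  have hnum : (((u i).num.toNat : ℕ) : ℚ) = u i * (u i).den := by
    rw [Rat.mul_den_eq_num]
    exact_mod_cast Int.toNat_of_nonneg (Rat.num_nonneg.2 (hu i))
  rw [Nat.cast_mul, Nat.cast_div (Finset.dvd_prod_of_mem _ (Finset.mem_univ i))
    (by exact_mod_cast (u i).den_ne_zero), hnum]
  field_simp

theorem exists_nonneg_add_smul_support_ssubset {ι K : Type*} [Fintype ι] [Field K] [LinearOrder K]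
    [IsStrictOrderedRing K] {x u : ι → K} (hx : 0 ≤ x) (hu : u.support ⊆ x.support)
    (hneg : ∃ i, u i < 0) :
    ∃ t : K, 0 ≤ t ∧ 0 ≤ x + t • u ∧ (x + t • u).support ⊂ x.support := by
  classical
  obtain ⟨i₀, hi₀, hmin⟩ := Finset.exists_min_image {i | u i < 0} (fun i ↦ x i / -u i)
    (by simpa [Finset.Nonempty] using hneg)
  rw [Finset.mem_filter_univ] at hi₀
  set t := x i₀ / -u i₀
  have ht : 0 ≤ t := div_nonneg (hx i₀) (neg_nonneg.2 hi₀.le)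
  refine ⟨t, ht, fun i ↦ ?_, ?_⟩
  · rcases lt_or_ge (u i) 0 with hi | hi
    · have := (le_div_iff₀ (neg_pos.2 hi)).1 (hmin i ((Finset.mem_filter_univ i).2 hi))
      simp only [Pi.zero_apply, Pi.add_apply, Pi.smul_apply, smul_eq_mul]
      linarith
    · simpa using add_nonneg (hx i) (mul_nonneg ht hi)
  · refine (Set.ssubset_iff_of_subset fun i hi ↦ ?_).2 ⟨i₀, hu hi₀.ne, ?_⟩
    · by_contra hxi
      have hui : u i = 0 := Function.notMem_support.1 fun h ↦ hxi (hu h)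
      simp_all
    · have : t * u i₀ = -x i₀ := by
        rw [div_mul_eq_mul_div, div_eq_iff (neg_ne_zero.2 hi₀.ne)]; ring
      simp [this]

namespace Matrix

variable {μ ι K : Type*} [Fintype ι]

theorem exists_submatrix_det_ne_zero [Field K] [Finite μ] [DecidableEq ι] {M : Matrix μ ι K}
    (hM : LinearIndependent K M.col) : ∃ f : ι → μ, (M.submatrix f id).det ≠ 0 := by
  obtain ⟨κ, r, -, hspan, hli⟩ := exists_linearIndependent' K M.row
  have : Fintype κ := have := hli.finite; Fintype.ofFinite κ
  have hcard : Fintype.card κ = Fintype.card ι := by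
    rw [← finrank_span_eq_card hli, hspan, ← rank_eq_finrank_span_row, rank_eq_finrank_span_cols,
      finrank_span_eq_card hM]
  refine ⟨r ∘ Fintype.equivOfCardEq hcard.symm, ?_⟩
  rw [← isUnit_iff_ne_zero, ← isUnit_iff_isUnit_det, ← linearIndependent_rows_iff_isUnit]
  exact hli.comp _ (Fintype.equivOfCardEq _).injective

theorem exists_mulVec_eq_zero_of_not_linearIndepOn [Field K] {M : Matrix μ ι K} {s : Set ι}
    (h : ¬LinearIndepOn K M.col s) : ∃ u : ι → K, u ≠ 0 ∧ u.support ⊆ s ∧ M *ᵥ u = 0 := by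
  obtain ⟨l, hl_supp, hl_ker, hl_ne⟩ := linearDepOn_iff'.1 h
  refine ⟨l, by simpa using hl_ne, ?_, ?_⟩
  · rw [Finsupp.fun_support_eq]
    exact (Finsupp.mem_supported K l).1 hl_supp
  · rw [Finsupp.linearCombination_apply, Finsupp.sum_fintype _ _ (by simp)] at hl_ker
    rw [← hl_ker]
    funext j
    simp [mulVec, dotProduct, mul_comm]

theorem abs_le_factorial_mul_pow_of_mulVec_eq [DecidableEq ι] [Field K] [LinearOrder K]
    [IsStrictOrderedRing K] {N : Matrix ι ι ℤ} (hN : N.det ≠ 0) {b : ι → ℤ} {a : ℕ}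
    (hNa : ∀ i j, |N i j| ≤ a) (hba : ∀ i, |b i| ≤ a) {x : ι → K}
    (hx : N.map (↑) *ᵥ x = fun i ↦ (b i : K)) (i : ι) :
    |x i| ≤ (Fintype.card ι).factorial * a ^ Fintype.card ι := by
  have hcramer : (N.det : K) * x i = ((N.updateCol i b).det : K) := by
    have hadj :
        adjugate (N.map (↑)) *ᵥ (fun i ↦ (b i : K)) = (N.map (Int.cast : ℤ → K)).det • x := by
      rw [← hx, mulVec_mulVec, adjugate_mul, smul_mulVec, one_mulVec]
    have := congrFun (cramer_eq_adjugate_mulVec (N.map (↑)) (fun i ↦ (b i : K))) i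
    rw [cramer_apply, hadj] at this
    rw [Int.cast_det, Int.cast_det, map_updateCol]
    exact this.symm
  have hU : |(N.updateCol i b).det| ≤ (Fintype.card ι).factorial * a ^ Fintype.card ι := by
    have := det_le (abv := AbsoluteValue.abs) (x := (a : ℤ)) (A := N.updateCol i b) fun k l ↦ by
      rcases eq_or_ne l i with rfl | hl
      · simpa using hba k
      · simpa [updateCol_apply, hl] using hNa k l
    simpa using this
  calc |x i| ≤ |(N.det : K)| * |x i| := by
        refine le_mul_of_one_le_left (abs_nonneg _) ?_
        exact_mod_cast Int.one_le_abs hN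
    _ = |((N.updateCol i b).det : K)| := by rw [← abs_mul, hcramer]
    _ ≤ _ := by exact_mod_cast hU

section Bound

variable [Fintype μ] [Field K] [LinearOrder K] [IsStrictOrderedRing K]
  {A : Matrix μ ι ℤ} {c : μ → ℤ} {a : ℕ}

theorem abs_le_pow_of_linearIndepOn_support (hA : ∀ j i, |A j i| ≤ a) (hc : ∀ j, |c j| ≤ a)
    {x : ι → K} (hx : A.map (↑) *ᵥ x = fun j ↦ (c j : K))
    (hli : LinearIndepOn K (A.map (Int.cast : ℤ → K)).col x.support) (i : ι) :
    |x i| ≤ ((Fintype.card μ * a + 1) ^ Fintype.card ι : ℕ) := by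
  classical
  have hM :
      LinearIndependent K ((A.map (Int.cast : ℤ → K)).submatrix id ((↑) : x.support → ι)).col :=
    hli
  obtain ⟨f, hf⟩ := exists_submatrix_det_ne_zero hM
  set N : Matrix x.support x.support ℤ := A.submatrix f (↑)
  have hN : N.det ≠ 0 := fun h ↦ hf (by
    rw [show ((A.map (↑)).submatrix id (↑)).submatrix f id = N.map (Int.cast : ℤ → K) from rfl,
      ← Int.cast_det, h, Int.cast_zero])
  have hf_inj : Function.Injective f := fun j j' h ↦ by
    by_contra hne
    exact hN (det_zero_of_row_eq hne (funext fun k ↦ by simp [N, h]))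
  have hxs : N.map (↑) *ᵥ (fun j : x.support ↦ x j) = fun j ↦ (c (f j) : K) := by
    funext j
    rw [← congrFun hx (f j)]
    simp only [mulVec, dotProduct, map_apply, N, submatrix_apply]
    rw [Finset.sum_set_coe (f := fun i ↦ (A (f j) i : K) * x i)]
    exact Finset.sum_subset (Finset.subset_univ _) fun i _ hi ↦ by simp_all
  by_cases hi : i ∈ x.support
  · calc |x i| ≤ _ :=
          abs_le_factorial_mul_pow_of_mulVec_eq hN (fun _ _ ↦ hA _ _) (fun _ ↦ hc _) hxs ⟨i, hi⟩
      _ ≤ ((Fintype.card μ * a + 1) ^ Fintype.card x.support : ℕ) := by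
          exact_mod_cast Nat.factorial_mul_pow_le_pow (Fintype.card_le_of_injective f hf_inj) a
      _ ≤ _ := by
          gcongr
          · omega
          · exact Fintype.card_subtype_le _
  · simp only [Function.notMem_support.1 hi, abs_zero]
    positivity

theorem apply_le_pow_of_mulVec_eq (hA : ∀ j i, |A j i| ≤ a) (hc : ∀ j, |c j| ≤ a)
    (hker : ∀ u : ι → K, 0 ≤ u → A.map (↑) *ᵥ u = 0 → u = 0)
    {x : ι → K} (hx₀ : 0 ≤ x) (hx : A.map (↑) *ᵥ x = fun j ↦ (c j : K)) (i : ι) :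
    x i ≤ ((Fintype.card μ * a + 1) ^ Fintype.card ι : ℕ) := by
  induction hk : x.support.ncard using Nat.strong_induction_on generalizing x with
  | _ k ih =>
  by_cases hli : LinearIndepOn K (A.map (Int.cast : ℤ → K)).col x.support
  · exact (le_abs_self _).trans (abs_le_pow_of_linearIndepOn_support hA hc hx hli i)
  obtain ⟨u, hu_ne, hu_supp, hu_ker⟩ := exists_mulVec_eq_zero_of_not_linearIndepOn hli
  have step : ∀ v : ι → K, v.support ⊆ x.support → A.map (↑) *ᵥ v = 0 → (∃ i, v i < 0) →
      ∃ t : K, 0 ≤ t ∧ x i + t * v i ≤ ((Fintype.card μ * a + 1) ^ Fintype.card ι : ℕ) := by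
    intro v hv hv_ker hneg
    obtain ⟨t, ht, hy₀, hy⟩ := exists_nonneg_add_smul_support_ssubset hx₀ hv hneg
    have hy_sol : A.map (↑) *ᵥ (x + t • v) = fun j ↦ (c j : K) := by
      rw [mulVec_add, mulVec_smul, hv_ker, smul_zero, add_zero, hx]
    refine ⟨t, ht, ?_⟩
    simpa using ih _ (hk ▸ Set.ncard_lt_ncard hy) hy₀ hy_sol rfl
  have hneg : ∃ i, u i < 0 := by
    by_contra! h
    exact hu_ne (hker u h hu_ker)
  have hpos : ∃ i, (-u) i < 0 := by
    by_contra! h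
    exact hu_ne (neg_eq_zero.1 (hker (-u) h (by rw [mulVec_neg, hu_ker, neg_zero])))
  obtain ⟨t, ht, hy⟩ := step u hu_supp hu_ker hneg
  obtain ⟨t', ht', hz⟩ := step (-u) (by rwa [Function.support_neg])
    (by rw [mulVec_neg, hu_ker, neg_zero]) hpos
  rcases le_total 0 (u i) with hui | hui
  · nlinarith
  · simp only [Pi.neg_apply, mul_neg] at hz
    nlinarith

end Bound

theorem exists_nat_mulVec_eq_zero {A : Matrix μ ι ℤ} {u : ι → ℚ} (hu₀ : 0 ≤ u)
    (hu : A.map (↑) *ᵥ u = 0) (hne : u ≠ 0) :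
    ∃ w : ι → ℕ, w ≠ 0 ∧ A *ᵥ (fun i ↦ (w i : ℤ)) = 0 := by
  obtain ⟨d, hd, w, hw⟩ := Rat.exists_nat_mul_eq_natCast hu₀
  refine ⟨w, fun h ↦ hne (funext fun i ↦ ?_), ?_⟩
  · simpa [h, hd.ne'] using hw i
  · have : A.map (↑) *ᵥ (fun i ↦ (w i : ℚ)) = 0 := by
      rw [show (fun i ↦ (w i : ℚ)) = (d : ℚ) • u from funext hw, mulVec_smul, hu, smul_zero]
    funext j
    have := congrFun this j
    simp only [mulVec, dotProduct, map_apply, Pi.zero_apply] at this ⊢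
    exact_mod_cast this

theorem infinite_setOf_mulVec_eq {A : Matrix μ ι ℤ} {c : μ → ℤ} {x w : ι → ℕ}
    (hx : A *ᵥ (fun i ↦ (x i : ℤ)) = c) (hw : A *ᵥ (fun i ↦ (w i : ℤ)) = 0) (hne : w ≠ 0) :
    {x : ι → ℕ | A *ᵥ (fun i ↦ (x i : ℤ)) = c}.Infinite := by
  obtain ⟨i₀, hi₀⟩ := Function.ne_iff.1 hne
  refine Set.infinite_of_injective_forall_mem (f := fun t : ℕ ↦ x + t • w) (fun t t' h ↦ ?_)
    fun t ↦ ?_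
  · simpa [show w i₀ ≠ 0 from hi₀] using congrFun h i₀
  have : (fun i ↦ ((x + t • w) i : ℤ)) = (fun i ↦ (x i : ℤ)) + (t : ℤ) • fun i ↦ (w i : ℤ) := by
    funext i; simp
  simp only [Set.mem_ofPred_eq, this, mulVec_add, mulVec_smul, hx, hw, smul_zero, add_zero]

end Matrix

/-- If a system of `m` linear equations in `n` natural-number variables with
coefficients and constants bounded by `a` has a solution exceeding
`((m+2)·a+1)^n` in some component, then it has infinitely many solutions. -/
theorem stmt_14 (m n : ℕ) (A : Fin m → Fin n → ℤ) (c : Fin m → ℤ) (a : ℕ)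
    (hA : ∀ j i, |A j i| ≤ (a : ℤ)) (hc : ∀ j, |c j| ≤ (a : ℤ))
    (hbig : ∃ x ∈ {x : Fin n → ℕ | ∀ j, ∑ i, A j i * (x i : ℤ) = c j},
      ∃ i, ((m + 2) * a + 1) ^ n < x i) :
    {x : Fin n → ℕ | ∀ j, ∑ i, A j i * (x i : ℤ) = c j}.Infinite := by
  obtain ⟨x, hx, i, hxi⟩ := hbig
  have hS : {x : Fin n → ℕ | ∀ j, ∑ i, A j i * (x i : ℤ) = c j} =
      {x | A *ᵥ (fun i ↦ (x i : ℤ)) = c} := by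
    ext; exact funext_iff.symm
  by_cases hker : ∀ u : Fin n → ℚ, 0 ≤ u → Matrix.map A (↑) *ᵥ u = 0 → u = 0
  · refine absurd hxi (not_lt.2 ?_)
    have hxℚ : Matrix.map A (↑) *ᵥ (fun i ↦ (x i : ℚ)) = fun j ↦ (c j : ℚ) := funext fun j ↦ by
      change ∑ i, (A j i : ℚ) * x i = c j
      exact_mod_cast hx j
    have := apply_le_pow_of_mulVec_eq hA hc hker (fun i ↦ by simp) hxℚ i
    rw [Fintype.card_fin, Fintype.card_fin] at this
    calc x i ≤ (m * a + 1) ^ n := by exact_mod_cast this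
      _ ≤ ((m + 2) * a + 1) ^ n := by gcongr; nlinarith
  push Not at hker
  obtain ⟨u, hu₀, hu, hne⟩ := hker
  obtain ⟨w, hw_ne, hw⟩ := exists_nat_mulVec_eq_zero hu₀ hu hne
  rw [hS]
  exact infinite_setOf_mulVec_eq (funext hx) hw hw_ne
end
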